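/- Fix constants k₀ ≥ 4 and C₀ ≥ 1000. For each B̲ > 0 there exists B̄ > 0, depending only on B̲, such that the following holds. Let E ⊂ ℝ² be finite, let f : E → [0,∞), let M ≥ 0, let Q ∈ Λ^♯, and let x_Q^♯ ∈ Q be a point with dist(x_Q^♯, E) ≥ c₀δ_Q. Suppose Γ₊^♯(x_Q^♯, 4k₀, M) ≠ ∅. Then at least one of the following holds: (A) f(x) ≥ B̲Mδ_Q² for all x ∈ E ∩ 2Q; or (B) f(x) ≤ B̄Mδ_Q² for all x ∈ E ∩ 2Q. -/

import Mathlib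

/-!
Suppose `f w < B̲ M δ²` at some `w ∈ E ∩ 2Q`, and let `z ∈ E ∩ 2Q`. The nonempty `Γ₊^♯` yields a
nonnegative `F` with `‖F‖_{C²} ≤ M` agreeing with `f` at `z` and `w`. Along the segment from `w`
to `z`, `F` lies below its Taylor parabola `F w + t F' + K t²` with `K = M |z - w|₁²`, and this
parabola stays nonnegative because `F` does; its discriminant gives `F' ≤ 2 √(K F w)`, hence
`F z ≤ (√(F w) + √K)²`. As `|z - w|₁ < 4δ`, this is `f z ≤ (√B̲ + 4)² M δ²`.
-/

open Set Real Pointwise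

noncomputable section

abbrev E2 := EuclideanSpace ℝ (Fin 2)

/-- Partial derivative in coordinate direction `i`. -/
noncomputable def pd (i : Fin 2) (F : E2 → ℝ) : E2 → ℝ :=
  fun x => fderiv ℝ F x (EuclideanSpace.single i 1)

/-- Iterated partial derivative `∂^α` for a multi-index `α = (α₁, α₂)`. -/
noncomputable def Dmul (α : ℕ × ℕ) (F : E2 → ℝ) : E2 → ℝ :=
  (pd 0)^[α.1] ((pd 1)^[α.2] F)

/-- The multi-indices `α` with `|α| ≤ 2`. -/
def multiIdx2 : Finset (ℕ × ℕ) :=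
  (Finset.range 3 ×ˢ Finset.range 3).filter (fun α => α.1 + α.2 ≤ 2)

/-- `(Σ_{|α| ≤ 2} |∂^α F (x)|²)^{1/2}`. -/
noncomputable def C2sum (F : E2 → ℝ) (x : E2) : ℝ :=
  Real.sqrt (∑ α ∈ multiIdx2, (Dmul α F x) ^ 2)

/-- `‖F‖_{C²(ℝ²)} ≤ M`. -/
def C2NormLE (F : E2 → ℝ) (M : ℝ) : Prop := ∀ x, C2sum F x ≤ M

/-- `f ∈ C²₊(E)`: `f` is the restriction to `E` of a nonnegative `C²` function of finite norm. -/
def MemC2plusTrace (E : Set E2) (f : E2 → ℝ) : Prop :=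
  ∃ F : E2 → ℝ, ContDiff ℝ 2 F ∧ (∀ x, 0 ≤ F x) ∧ (∀ x ∈ E, F x = f x) ∧ ∃ M, C2NormLE F M

/-- The trace norm `‖f‖_{C²₊(E)}`. -/
noncomputable def traceNormPlus (E : Set E2) (f : E2 → ℝ) : ℝ :=
  sInf { M | ∃ F : E2 → ℝ, ContDiff ℝ 2 F ∧ (∀ x, 0 ≤ F x) ∧ (∀ x ∈ E, F x = f x) ∧
    C2NormLE F M }

/-- The one-jet `𝒥_x F`, as an affine function on `ℝ²`. -/
noncomputable def jet (F : E2 → ℝ) (x : E2) : E2 → ℝ :=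
  fun y => F x + fderiv ℝ F x (y - x)

/-- The (half-open) square with center `c` and sidelength `δ`. -/
def sqC (c : E2) (δ : ℝ) : Set E2 :=
  {x | ∀ i : Fin 2, c i - δ / 2 ≤ x i ∧ x i < c i + δ / 2}

/-- `σ(x, S)`. -/
def sigmaSet (x : E2) (S : Set E2) : Set (E2 → ℝ) :=
  { P | ∃ φ : E2 → ℝ, ContDiff ℝ 2 φ ∧ (∀ z ∈ S, φ z = 0) ∧ C2NormLE φ 1 ∧ P = jet φ x }

/-- `σ^♯(x, k)`. -/
def sigmaSharp (E : Set E2) (x : E2) (k : ℕ) : Set (E2 → ℝ) :=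
  { P | ∀ S : Set E2, S ⊆ E → S.ncard ≤ k → P ∈ sigmaSet x S }

/-- `Γ₊(x, S, M)` (for the data `f`). -/
def GammaPlus (f : E2 → ℝ) (x : E2) (S : Set E2) (M : ℝ) : Set (E2 → ℝ) :=
  { P | ∃ F : E2 → ℝ, ContDiff ℝ 2 F ∧ (∀ y, 0 ≤ F y) ∧ (∀ z ∈ S, F z = f z) ∧
      C2NormLE F M ∧ P = jet F x }

/-- `Γ₊^♯(x, k, M)` (for `f` given on `E`). -/
def GammaSharp (E : Set E2) (f : E2 → ℝ) (x : E2) (k : ℕ) (M : ℝ) : Set (E2 → ℝ) :=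
  { P | ∀ S : Set E2, S ⊆ E → S.ncard ≤ k → P ∈ GammaPlus f x S M }

/-- `ℬ(x, δ) = {P : |∂^α P(x)| ≤ δ^{2-|α|} for |α| ≤ 1}`. -/
def jetBall (x : E2) (δ : ℝ) : Set (E2 → ℝ) :=
  { P | |P x| ≤ δ ^ 2 ∧ ∀ i : Fin 2, |fderiv ℝ P x (EuclideanSpace.single i 1)| ≤ δ }

/-- `|P|_{ℛ_x}`. -/
noncomputable def jetNormAt (x : E2) (P : E2 → ℝ) : ℝ :=
  Real.sqrt ((P x) ^ 2 + ‖fderiv ℝ P x‖ ^ 2)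

/-- diameter of a set of jets with respect to `|·|_{ℛ_x}`. -/
noncomputable def jetDiam (x : E2) (A : Set (E2 → ℝ)) : ℝ :=
  sSup { r | ∃ P ∈ A, ∃ P' ∈ A, r = jetNormAt x (P - P') }

noncomputable def vec2 (a b : ℝ) : E2 := (WithLp.equiv 2 (Fin 2 → ℝ)).symm ![a, b]

/-- A dyadic square is encoded by a triple `q = (i, j, k)`,
corresponding to `[2^k i, 2^k (i+1)) × [2^k j, 2^k (j+1))`; its sidelength is `2^k`. -/
noncomputable def dyadicLen (q : ℤ × ℤ × ℤ) : ℝ := (2 : ℝ) ^ q.2.2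

noncomputable def dyadicCenter (q : ℤ × ℤ × ℤ) : E2 :=
  vec2 ((2 : ℝ) ^ q.2.2 * ((q.1 : ℝ) + 1 / 2)) ((2 : ℝ) ^ q.2.2 * ((q.2.1 : ℝ) + 1 / 2))

noncomputable def dyadicSq (q : ℤ × ℤ × ℤ) : Set E2 := sqC (dyadicCenter q) (dyadicLen q)

/-- The concentric dilate `λQ` of the dyadic square `q`. -/
noncomputable def dilate (q : ℤ × ℤ × ℤ) (lam : ℝ) : Set E2 :=
  sqC (dyadicCenter q) (lam * dyadicLen q)

/-- The dyadic parent `Q⁺`. -/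
def dyadicParent (q : ℤ × ℤ × ℤ) : ℤ × ℤ × ℤ := (Int.fdiv q.1 2, Int.fdiv q.2.1 2, q.2.2 + 1)

/-- Membership in the Calderón–Zygmund collection `Λ₀`. -/
def memLambda0 (E : Set E2) (k₀ : ℕ) (C₀ : ℝ) (q : ℤ × ℤ × ℤ) : Prop :=
  dyadicLen q ≤ 1 ∧
  (∀ x ∈ dilate q 2, C₀ * dyadicLen q ≤ jetDiam x (sigmaSharp E x k₀)) ∧
  (∃ y ∈ dilate (dyadicParent q) 2, jetDiam y (sigmaSharp E y k₀) < 2 * C₀ * dyadicLen q)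

def Lambda0 (E : Set E2) (k₀ : ℕ) (C₀ : ℝ) : Set (ℤ × ℤ × ℤ) := { q | memLambda0 E k₀ C₀ q }

def LambdaSharp (E : Set E2) (k₀ : ℕ) (C₀ : ℝ) : Set (ℤ × ℤ × ℤ) :=
  { q | q ∈ Lambda0 E k₀ C₀ ∧ (E ∩ dilate q 2).Nonempty }

lemma abs_sub_le_mul_abs_of_hasDerivAt {φ φ' : ℝ → ℝ} (hφ : ∀ s, HasDerivAt φ (φ' s) s)
    {C t : ℝ} (hC : ∀ s ∈ uIcc 0 t, |φ' s| ≤ C) : |φ t - φ 0| ≤ C * |t| := by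
  simpa [Real.norm_eq_abs] using Convex.norm_image_sub_le_of_norm_hasDerivWithin_le
    (fun s _ => (hφ s).hasDerivWithinAt) (fun s hs => by simpa using hC s hs)
    (convex_uIcc 0 t) left_mem_uIcc right_mem_uIcc

lemma sub_sub_mul_deriv_le_mul_sq {g g' g'' : ℝ → ℝ} (hg : ∀ s, HasDerivAt g (g' s) s)
    (hg' : ∀ s, HasDerivAt g' (g'' s) s) {K : ℝ} (hK : ∀ s, |g'' s| ≤ K) (t : ℝ) :
    g t - g 0 - t * g' 0 ≤ K * t ^ 2 := by
  have hslope : ∀ s ∈ uIcc 0 t, |g' s - g' 0| ≤ K * |t| := fun s hs => by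
    have hs' : |s| ≤ |t| := by simpa using abs_sub_left_of_mem_uIcc hs
    have hK0 : 0 ≤ K := (abs_nonneg _).trans (hK 0)
    calc |g' s - g' 0| ≤ K * |s| := abs_sub_le_mul_abs_of_hasDerivAt hg' fun r _ => hK r
      _ ≤ K * |t| := by gcongr
  have hlin : ∀ s, HasDerivAt (fun s => g s - s * g' 0) (g' s - g' 0) s := fun s =>
    (hg s).sub (by simpa using (hasDerivAt_id s).mul_const (g' 0))
  have h := abs_sub_le_mul_abs_of_hasDerivAt hlin hslope
  calc g t - g 0 - t * g' 0 ≤ |(g t - t * g' 0) - (g 0 - 0 * g' 0)| := by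
        rw [zero_mul, sub_zero, sub_right_comm]; exact le_abs_self _
    _ ≤ K * |t| * |t| := h
    _ = K * t ^ 2 := by rw [mul_assoc, abs_mul_abs_self, sq]

lemma le_sq_sqrt_add_sqrt_of_nonneg {g g' g'' : ℝ → ℝ} (hg : ∀ s, HasDerivAt g (g' s) s)
    (hg' : ∀ s, HasDerivAt g' (g'' s) s) {K : ℝ} (hK : ∀ s, |g'' s| ≤ K)
    (hpos : ∀ s, 0 ≤ g s) : g 1 ≤ (√(g 0) + √K) ^ 2 := by
  have hK0 : 0 ≤ K := (abs_nonneg _).trans (hK 0)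
  have hparabola : ∀ t, 0 ≤ K * (t * t) + g' 0 * t + g 0 := fun t => by
    nlinarith [sub_sub_mul_deriv_le_mul_sq hg hg' hK t, hpos t]
  have hdiscrim : g' 0 ^ 2 ≤ (2 * √K * √(g 0)) ^ 2 := by
    have hd := discrim_le_zero hparabola
    rw [discrim] at hd
    rw [mul_pow, mul_pow, sq_sqrt hK0, sq_sqrt (hpos 0)]
    linarith
  have hslope : g' 0 ≤ 2 * √K * √(g 0) := abs_le_of_sq_le_sq' hdiscrim (by positivity) |>.2
  have htaylor := sub_sub_mul_deriv_le_mul_sq hg hg' hK 1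
  nlinarith [sq_sqrt hK0, sq_sqrt (hpos 0)]

lemma pd_pd_eq_fderiv_fderiv {F : E2 → ℝ} (hF : ContDiff ℝ 2 F) (i j : Fin 2) (y : E2) :
    pd i (pd j F) y
      = fderiv ℝ (fderiv ℝ F) y (EuclideanSpace.single i 1) (EuclideanSpace.single j 1) := by
  have hd : DifferentiableAt ℝ (fderiv ℝ F) y :=
    (hF.fderiv_right le_rfl).differentiable one_ne_zero y
  change fderiv ℝ (fun x => fderiv ℝ F x (EuclideanSpace.single j 1)) y _ = _
  rw [fderiv_clm_apply hd (differentiableAt_const _)]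
  simp

lemma abs_Dmul_le_of_C2NormLE {F : E2 → ℝ} {M : ℝ} (hF : C2NormLE F M) {α : ℕ × ℕ}
    (hα : α ∈ multiIdx2) (y : E2) : |Dmul α F y| ≤ M :=
  calc |Dmul α F y| = √(Dmul α F y ^ 2) := (sqrt_sq_eq_abs _).symm
    _ ≤ √(∑ β ∈ multiIdx2, Dmul β F y ^ 2) :=
        sqrt_le_sqrt (Finset.single_le_sum (fun β _ => sq_nonneg (Dmul β F y)) hα)
    _ ≤ M := hF y

lemma abs_fderiv_fderiv_single_le {F : E2 → ℝ} (hF : ContDiff ℝ 2 F) {M : ℝ}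
    (hFM : C2NormLE F M) (y : E2) (i j : Fin 2) :
    |fderiv ℝ (fderiv ℝ F) y (EuclideanSpace.single i 1) (EuclideanSpace.single j 1)| ≤ M := by
  have hsymm := second_derivative_symmetric (f := F) (x := y)
    (fun z => (hF.differentiable two_ne_zero z).hasFDerivAt)
    ((hF.fderiv_right le_rfl).differentiable one_ne_zero y).hasFDerivAt
  have h00 := abs_Dmul_le_of_C2NormLE hFM (α := (2, 0)) (by decide) y
  have h11 := abs_Dmul_le_of_C2NormLE hFM (α := (1, 1)) (by decide) y
  have h22 := abs_Dmul_le_of_C2NormLE hFM (α := (0, 2)) (by decide) y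
  simp only [Dmul, Function.iterate_succ, Function.iterate_zero, Function.comp_apply,
    id_eq, pd_pd_eq_fderiv_fderiv hF] at h00 h11 h22
  fin_cases i <;> fin_cases j
  exacts [h00, h11, hsymm _ _ ▸ h11, h22]

lemma abs_fderiv_fderiv_apply_le {F : E2 → ℝ} (hF : ContDiff ℝ 2 F) {M : ℝ}
    (hFM : C2NormLE F M) (y u : E2) :
    |fderiv ℝ (fderiv ℝ F) y u u| ≤ M * (|u 0| + |u 1|) ^ 2 := by
  set B := fderiv ℝ (fderiv ℝ F) y
  have hu : u = ∑ i, u i • EuclideanSpace.single i (1 : ℝ) := by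
    ext k; fin_cases k <;> simp
  have hexpand : B u u = ∑ i, ∑ j, u i * u j *
      B (EuclideanSpace.single i 1) (EuclideanSpace.single j 1) := by
    conv_lhs => rw [hu]
    simp only [map_sum, map_smul, FunLike.coe_sum, Finset.sum_apply,
      FunLike.coe_smul, Pi.smul_apply, smul_eq_mul, Finset.mul_sum]
    rw [Finset.sum_comm]
    exact Finset.sum_congr rfl fun _ _ => Finset.sum_congr rfl fun _ _ => by ring
  calc |B u u| ≤ ∑ i, ∑ j, |u i| * |u j| * M := by
        rw [hexpand]
        refine (Finset.abs_sum_le_sum_abs _ _).trans (Finset.sum_le_sum fun i _ => ?_)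
        refine (Finset.abs_sum_le_sum_abs _ _).trans (Finset.sum_le_sum fun j _ => ?_)
        rw [abs_mul, abs_mul]
        exact mul_le_mul_of_nonneg_left (abs_fderiv_fderiv_single_le hF hFM y i j) (by positivity)
    _ = M * (|u 0| + |u 1|) ^ 2 := by simp only [Fin.sum_univ_two]; ring

lemma le_sq_sqrt_add_of_C2NormLE {F : E2 → ℝ} (hF : ContDiff ℝ 2 F) (hpos : ∀ x, 0 ≤ F x)
    {M : ℝ} (hFM : C2NormLE F M) (a b : E2) :
    F b ≤ (√(F a) + √M * (|b 0 - a 0| + |b 1 - a 1|)) ^ 2 := by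
  set u := b - a
  have hF1 : Differentiable ℝ F := hF.differentiable two_ne_zero
  have hF2 : Differentiable ℝ (fderiv ℝ F) := (hF.fderiv_right le_rfl).differentiable one_ne_zero
  have hline : ∀ s : ℝ, HasDerivAt (fun s : ℝ => a + s • u) u s := fun s => by
    simpa using ((hasDerivAt_id s).smul_const u).const_add a
  have hg : ∀ s, HasDerivAt (fun s : ℝ => F (a + s • u)) (fderiv ℝ F (a + s • u) u) s :=
    fun s => (hF1 _).hasFDerivAt.comp_hasDerivAt s (hline s)
  have hg' : ∀ s, HasDerivAt (fun s : ℝ => fderiv ℝ F (a + s • u) u)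
      (fderiv ℝ (fderiv ℝ F) (a + s • u) u u) s :=
    fun s => by
      simpa using ((hF2 _).hasFDerivAt.comp_hasDerivAt s (hline s)).clm_apply
        (hasDerivAt_const s u)
  have h := le_sq_sqrt_add_sqrt_of_nonneg hg hg'
    (fun s => abs_fderiv_fderiv_apply_le hF hFM (a + s • u) u) (fun s => hpos _)
  have hM : 0 ≤ M := (sqrt_nonneg _).trans (hFM a)
  simpa [u, sqrt_mul hM, sqrt_sq (by positivity : 0 ≤ |b 0 - a 0| + |b 1 - a 1|)] using h

lemma abs_sub_lt_of_mem_sqC {c x y : E2} {δ : ℝ} (hx : x ∈ sqC c δ) (hy : y ∈ sqC c δ)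
    (i : Fin 2) : |x i - y i| < δ := by
  have := hx i; have := hy i
  rw [abs_lt]; constructor <;> linarith

lemma exists_of_mem_gammaSharp_pair {E : Set E2} {f : E2 → ℝ} {x z w : E2} {k : ℕ} {M : ℝ}
    {P : E2 → ℝ} (hP : P ∈ GammaSharp E f x k M) (hz : z ∈ E) (hw : w ∈ E) (hk : 2 ≤ k) :
    ∃ F : E2 → ℝ, ContDiff ℝ 2 F ∧ (∀ y, 0 ≤ F y) ∧ C2NormLE F M ∧ F z = f z ∧ F w = f w := by
  have hcard : ({z, w} : Set E2).ncard ≤ k := by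
    have := ncard_insert_le z {w}
    rw [ncard_singleton] at this
    omega
  obtain ⟨F, hF, hpos, hFf, hFM, -⟩ := hP {z, w} (pair_subset hz hw) hcard
  exact ⟨F, hF, hpos, hFM, hFf z (by simp), hFf w (by simp)⟩

/-- (Lemma 7.5 of [JL20].) Dichotomy for the local data: for each
`B̲ > 0` there is `B̄ > 0` such that either `f ≥ B̲Mδ_Q²` on all of `E ∩ 2Q`, or
`f ≤ B̄Mδ_Q²` on all of `E ∩ 2Q`. -/
theorem local_data_dichotomy :
    ∀ (k₀ : ℕ) (C₀ : ℝ), 4 ≤ k₀ → 1000 ≤ C₀ →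
      ∀ c₀ : ℝ, 0 < c₀ →
        ∀ Blo : ℝ, 0 < Blo →
          ∃ Bhi : ℝ, 0 < Bhi ∧
            ∀ E : Set E2, E.Finite →
              ∀ f : E2 → ℝ, (∀ x ∈ E, 0 ≤ f x) →
                ∀ M : ℝ, 0 ≤ M →
                  ∀ q ∈ LambdaSharp E k₀ C₀,
                    ∀ x ∈ dyadicSq q, (∀ y ∈ E, c₀ * dyadicLen q ≤ dist x y) →
                      (GammaSharp E f x (4 * k₀) M).Nonempty →
                      (∀ z ∈ E ∩ dilate q 2, Blo * M * dyadicLen q ^ 2 ≤ f z) ∨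
                      (∀ z ∈ E ∩ dilate q 2, f z ≤ Bhi * M * dyadicLen q ^ 2) := by
  intro k₀ C₀ hk₀ _ c₀ _ Blo hBlo
  refine ⟨(√Blo + 4) ^ 2, by positivity, ?_⟩
  intro E _ f _ M hM q _ x _ _ ⟨P, hP⟩
  refine or_iff_not_imp_left.2 fun hlarge => ?_
  push Not at hlarge
  obtain ⟨w, hw, hfw⟩ := hlarge
  intro z hz
  obtain ⟨F, hF, hpos, hFM, hFz, hFw⟩ :=
    exists_of_mem_gammaSharp_pair hP hz.1 hw.1 (by omega)
  set δ := dyadicLen q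
  have hδ : 0 < δ := zpow_pos two_pos _
  have hzw : |z 0 - w 0| + |z 1 - w 1| ≤ 4 * δ := by
    have h0 := abs_sub_lt_of_mem_sqC hz.2 hw.2 0
    have h1 := abs_sub_lt_of_mem_sqC hz.2 hw.2 1
    linarith
  calc f z = F z := hFz.symm
    _ ≤ (√(F w) + √M * (|z 0 - w 0| + |z 1 - w 1|)) ^ 2 :=
        le_sq_sqrt_add_of_C2NormLE hF hpos hFM w z
    _ ≤ (√(Blo * M * δ ^ 2) + √M * (4 * δ)) ^ 2 := by rw [hFw]; gcongr
    _ = (√Blo + 4) ^ 2 * M * δ ^ 2 := by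
      rw [sqrt_mul' _ (sq_nonneg δ), sqrt_mul hBlo.le, sqrt_sq hδ.le]
      linear_combination (√Blo + 4) ^ 2 * δ ^ 2 * sq_sqrt hM

end
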